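/- Let ℓ be a prime, n = 2, and f : GL_2(Q_ℓ) → C a right GL_2(Z_ℓ)-invariant integrable function with μ_f(S) = ∫_S f dx. Let M be the integral matrices in GL_2(Q_ℓ), M^{≥1} those with det of valuation ≥ 1, t₁ = diag(ℓ,1), t₂ = diag(ℓ,ℓ). Then μ_f(M^{≥1}) = (ℓ+1)·μ_f(M t₁) - ℓ·μ_f(M t₂). -/

import Mathlib

open MeasureTheory

noncomputable section

/-- `M`: the integral matrices in `GL₂(ℚ_ℓ)`. -/
def Mint (ℓ : ℕ) [Fact ℓ.Prime] : Set (Matrix (Fin 2) (Fin 2) ℚ_[ℓ]) :=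
  {x | (∀ i j, ‖x i j‖ ≤ 1) ∧ IsUnit x}

/-- `M^{≥1}`: integral matrices whose determinant has `ℓ`-adic valuation `≥ 1`. -/
def MintGeOne (ℓ : ℕ) [Fact ℓ.Prime] : Set (Matrix (Fin 2) (Fin 2) ℚ_[ℓ]) :=
  {x ∈ Mint ℓ | ‖x.det‖ ≤ ((ℓ : ℝ))⁻¹}

/-- `t_m = diag(ℓ,…,ℓ,1,…,1)` with `m` copies of `ℓ` (here `2×2`). -/
def tDiag (ℓ : ℕ) [Fact ℓ.Prime] (m : ℕ) : Matrix (Fin 2) (Fin 2) ℚ_[ℓ] :=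
  Matrix.diagonal fun i => if (i : ℕ) < m then (ℓ : ℚ_[ℓ]) else 1

/-- The coset `M·t_m`. -/
def Mt (ℓ : ℕ) [Fact ℓ.Prime] (m : ℕ) : Set (Matrix (Fin 2) (Fin 2) ℚ_[ℓ]) :=
  (fun x => x * tDiag ℓ m) '' Mint ℓ

/-!
Reduce modulo `ℓ`: an integral `x` has `‖det x‖ < 1` exactly when its reduction `x̄` kills some
line of `𝔽_ℓ²`. The integral matrices killing the line `c` form a translate `M t₁ k_c⁻¹` with
`k_c ∈ GL₂(ℤ_ℓ)`. If `x̄` kills two distinct lines then `x̄ = 0`, i.e. `x ∈ M t₂`, and then it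
kills all `ℓ + 1` of them. Hence `𝟙_{M^{≥1}} + ℓ • 𝟙_{M t₂} = ∑_c 𝟙_{M t₁ k_c⁻¹}` pointwise, and
after integrating, right `GL₂(ℤ_ℓ)`-invariance of `f` and of the measure turns every
`∫_{M t₁ k_c⁻¹} f` into `∫_{M t₁} f`.
-/

section Ultrametric

variable {R : Type*} [NormedRing R] [IsUltrametricDist R] {l m n : Type*} [Fintype m]

lemma Matrix.norm_mul_apply_le_one {x : Matrix l m R} {y : Matrix m n R}
    (hx : ∀ i j, ‖x i j‖ ≤ 1) (hy : ∀ i j, ‖y i j‖ ≤ 1) (i : l) (j : n) :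
    ‖(x * y) i j‖ ≤ 1 :=
  IsUltrametricDist.norm_sum_le_of_forall_le_of_nonneg zero_le_one fun k _ =>
    (norm_mul_le _ _).trans (mul_le_one₀ (hx i k) (norm_nonneg _) (hy k j))

lemma Matrix.norm_mul_apply_lt_one [Nonempty m] {x : Matrix l m R} {y : Matrix m n R} {i : l}
    {j : n} (hx : ∀ k, ‖x i k‖ < 1) (hy : ∀ k, ‖y k j‖ ≤ 1) : ‖(x * y) i j‖ < 1 := by
  obtain ⟨k, -, hk⟩ := IsUltrametricDist.exists_norm_finsetSum_le Finset.univ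
    fun k => x i k * y k j
  exact hk.trans_lt <| (norm_mul_le _ _).trans_lt <|
    mul_lt_one_of_nonneg_of_lt_one_left (norm_nonneg _) (hx k) (hy k)

lemma IsUltrametricDist.norm_add_lt_of_lt {G : Type*} [SeminormedAddCommGroup G]
    [IsUltrametricDist G] {a b : G} {r : ℝ} (ha : ‖a‖ < r) (hb : ‖b‖ < r) :
    ‖a + b‖ < r :=
  (IsUltrametricDist.norm_add_le_max a b).trans_lt (max_lt ha hb)

lemma IsUltrametricDist.norm_sub_lt_of_lt {G : Type*} [SeminormedAddCommGroup G]
    [IsUltrametricDist G] {a b : G} {r : ℝ} (ha : ‖a‖ < r) (hb : ‖b‖ < r) :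
    ‖a - b‖ < r := by
  rw [sub_eq_add_neg]
  exact norm_add_lt_of_lt ha (by rwa [norm_neg])

lemma IsUltrametricDist.norm_lt_one_of_norm_sub_mul_lt_one {u v a : R} (ha : ‖a‖ ≤ 1)
    (h : ‖u - a * v‖ < 1) (hv : ‖v‖ < 1) : ‖u‖ < 1 := by
  rw [← sub_add_cancel u (a * v)]
  exact norm_add_lt_of_lt h <| (norm_mul_le _ _).trans_lt <|
    mul_lt_one_of_nonneg_of_lt_one_right ha (norm_nonneg v) hv

end Ultrametric

lemma IsUltrametricDist.norm_sub_mul_lt_one_of_minor {K : Type*} [NormedField K]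
    [IsUltrametricDist K] {u₀ u₁ v₀ v₁ : K} (hu₁ : ‖u₁‖ = 1) (hv₁ : ‖v₁‖ ≤ 1)
    (hminor : ‖u₁ * v₀ - v₁ * u₀‖ < 1) {a : K} (hu : ‖u₀ - a * u₁‖ < 1) :
    ‖v₀ - a * v₁‖ < 1 := by
  have h : u₁ * (v₀ - a * v₁) = (u₁ * v₀ - v₁ * u₀) + v₁ * (u₀ - a * u₁) := by ring
  have := norm_add_lt_of_lt hminor <| (norm_mul_le _ _).trans_lt <|
    mul_lt_one_of_nonneg_of_lt_one_right hv₁ (norm_nonneg _) hu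
  rwa [← h, norm_mul, hu₁, one_mul] at this

lemma norm_div_sub_eq_norm_sub_mul {K : Type*} [NormedField K] {u v : K} (hv : ‖v‖ = 1)
    (c : K) : ‖u / v - c‖ = ‖u - c * v‖ := by
  have hv0 : v ≠ 0 := norm_ne_zero_iff.1 (by rw [hv]; exact one_ne_zero)
  rw [show u - c * v = (u / v - c) * v by field_simp, norm_mul, hv, mul_one]

namespace Padic

variable {p : ℕ} [Fact p.Prime]

lemma norm_le_inv_iff_lt_one {z : ℚ_[p]} : ‖z‖ ≤ (p : ℝ)⁻¹ ↔ ‖z‖ < 1 := by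
  simpa using norm_le_pow_iff_norm_lt_pow_add_one z (-1)

lemma norm_mul_inv_le_one_iff {z : ℚ_[p]} : ‖z * (p : ℚ_[p])⁻¹‖ ≤ 1 ↔ ‖z‖ < 1 := by
  have hp : (0 : ℝ) < p := Nat.cast_pos.2 (Fact.out : p.Prime).pos
  rw [norm_mul, norm_inv, norm_p, inv_inv, ← norm_le_inv_iff_lt_one, ← one_div, le_div_iff₀ hp]

lemma existsUnique_natCast_norm_sub_lt_one {z : ℚ_[p]} (hz : ‖z‖ ≤ 1) :
    ∃! a : ℕ, a < p ∧ ‖z - a‖ < 1 := by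
  have h := PadicInt.existsUnique_mem_range ⟨z, hz⟩
  simp only [IsLocalRing.mem_maximalIdeal, PadicInt.mem_nonunits, PadicInt.norm_def] at h
  exact h

lemma norm_lt_one_of_norm_sub_natCast_mul_lt_one_of_ne {u v : ℚ_[p]} (hu : ‖u‖ ≤ 1)
    (hv : ‖v‖ ≤ 1) {a b : ℕ} (ha : a < p) (hb : b < p) (hab : a ≠ b) (hua : ‖u - a * v‖ < 1)
    (hub : ‖u - b * v‖ < 1) : ‖v‖ < 1 := by
  by_contra hv1
  have hv1 : ‖v‖ = 1 := le_antisymm hv (not_lt.1 hv1)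
  obtain ⟨c, -, hc⟩ := existsUnique_natCast_norm_sub_lt_one (z := u / v)
    (by rwa [norm_div, hv1, div_one])
  exact hab ((hc a ⟨ha, (norm_div_sub_eq_norm_sub_mul hv1 _).trans_lt hua⟩).trans
    (hc b ⟨hb, (norm_div_sub_eq_norm_sub_mul hv1 _).trans_lt hub⟩).symm)

end Padic

lemma Matrix.norm_det_fin_two_lt_one {R : Type*} [NormedCommRing R] [IsUltrametricDist R]
    {y : Matrix (Fin 2) (Fin 2) R} (hy : ∀ i j, ‖y i j‖ ≤ 1)
    (hy₀ : ∀ i, ‖y i 0‖ < 1) : ‖y.det‖ < 1 := by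
  rw [Matrix.det_fin_two]
  exact IsUltrametricDist.norm_sub_lt_of_lt
    ((norm_mul_le _ _).trans_lt
      (mul_lt_one_of_nonneg_of_lt_one_left (norm_nonneg _) (hy₀ 0) (hy 1 1)))
    ((norm_mul_le _ _).trans_lt
      (mul_lt_one_of_nonneg_of_lt_one_right (hy 0 1) (norm_nonneg _) (hy₀ 1)))

lemma Matrix.norm_minor_fin_two_lt_one {R : Type*} [NormedCommRing R]
    {x : Matrix (Fin 2) (Fin 2) R} (hdet : ‖x.det‖ < 1) (i j : Fin 2) :
    ‖x i 1 * x j 0 - x j 1 * x i 0‖ < 1 := by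
  rw [Matrix.det_fin_two] at hdet
  fin_cases i <;> fin_cases j <;> simp only [Fin.zero_eta, Fin.mk_one, Fin.isValue]
  · simp
  · rwa [show x 0 1 * x 1 0 - x 1 1 * x 0 0 = -(x 0 0 * x 1 1 - x 0 1 * x 1 0) by ring, norm_neg]
  · rwa [show x 1 1 * x 0 0 - x 0 1 * x 1 0 = x 0 0 * x 1 1 - x 0 1 * x 1 0 by ring]
  · simp

lemma Matrix.norm_inv_apply_le_one {K : Type*} [NormedField K] {k : Matrix (Fin 2) (Fin 2) K}
    (hk : ∀ i j, ‖k i j‖ ≤ 1) (hdet : ‖k.det‖ = 1) (i j : Fin 2) : ‖k⁻¹ i j‖ ≤ 1 := by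
  rw [Matrix.inv_def, Matrix.adjugate_fin_two, Ring.inverse_eq_inv', Matrix.smul_apply,
    smul_eq_mul, norm_mul, norm_inv, hdet, inv_one, one_mul]
  fin_cases i <;> fin_cases j <;> simp [hk]

section InclusionExclusion

variable {α ι : Type*} [Fintype ι] {S : ι → Set α} {T : Set α} {N : ℕ}

lemma Set.indicator_iUnion_add_nsmul_indicator {M : Type*} [AddCommMonoid M]
    (hcard : Fintype.card ι = N + 1) (hTS : ∀ i, T ⊆ S i)
    (hST : Pairwise fun i j => S i ∩ S j ⊆ T) (f : α → M) (x : α) :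
    (⋃ i, S i).indicator f x + N • T.indicator f x = ∑ i, (S i).indicator f x := by
  classical
  by_cases hxT : x ∈ T
  · obtain ⟨i⟩ : Nonempty ι := Fintype.card_pos_iff.1 (by omega)
    simp only [Set.indicator_of_mem hxT, Set.indicator_of_mem (Set.mem_iUnion.2 ⟨i, hTS i hxT⟩),
      Set.indicator_of_mem (hTS _ hxT), Finset.sum_const, Finset.card_univ, hcard, succ_nsmul']
  by_cases hxS : x ∈ ⋃ i, S i
  · obtain ⟨i, hi⟩ := Set.mem_iUnion.1 hxS
    rw [Set.indicator_of_mem hxS, Set.indicator_of_notMem hxT, smul_zero, add_zero,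
      Finset.sum_eq_single i (fun j _ hji => Set.indicator_of_notMem
        (fun hj => hxT (hST hji ⟨hj, hi⟩)) f) (by simp), Set.indicator_of_mem hi]
  · simp only [Set.mem_iUnion, not_exists] at hxS
    simp [Set.indicator_of_notMem hxT, Set.indicator_of_notMem, hxS]

variable [MeasurableSpace α] {μ : Measure α} {E : Type*} [NormedAddCommGroup E] [NormedSpace ℝ E]

theorem setIntegral_iUnion_add_nsmul (hcard : Fintype.card ι = N + 1)
    (hS : ∀ i, MeasurableSet (S i)) (hT : MeasurableSet T) (hTS : ∀ i, T ⊆ S i)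
    (hST : Pairwise fun i j => S i ∩ S j ⊆ T) {f : α → E} (hf : Integrable f μ) :
    ∫ x in ⋃ i, S i, f x ∂μ + N • ∫ x in T, f x ∂μ = ∑ i, ∫ x in S i, f x ∂μ := by
  have hpt := integral_congr_ae (μ := μ) <| Filter.Eventually.of_forall
    (Set.indicator_iUnion_add_nsmul_indicator hcard hTS hST f)
  simp only [← Nat.cast_smul_eq_nsmul ℝ] at hpt ⊢
  rwa [integral_add (hf.indicator (MeasurableSet.iUnion hS)) ((hf.indicator hT).fun_smul (N : ℝ)),
    integral_smul, integral_finsetSum _ fun i _ => hf.indicator (hS i),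
    integral_indicator (MeasurableSet.iUnion hS), integral_indicator hT,
    Finset.sum_congr rfl fun i _ => integral_indicator (hS i)] at hpt

end InclusionExclusion

theorem setIntegral_preimage_mul_right {R E : Type*} [Ring R] [TopologicalSpace R]
    [IsTopologicalRing R] [MeasurableSpace R] [BorelSpace R] [NormedAddCommGroup E]
    [NormedSpace ℝ E] {ν : Measure R} {g : R} (hg : IsUnit g) (hν : ν.map (· * g) = ν)
    {f : R → E} (hf : ∀ x, f (x * g) = f x) (A : Set R) :
    ∫ x in (· * g) ⁻¹' A, f x ∂ν = ∫ x in A, f x ∂ν := by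
  obtain ⟨u, rfl⟩ := hg
  conv_rhs => rw [← hν]
  have hemb : MeasurableEmbedding (· * (u : R)) :=
    (ContinuousAddEquiv.mulRight u).toHomeomorph.measurableEmbedding
  simp only [hemb.setIntegral_map, hf]

section Cosets

variable {ℓ : ℕ} [Fact ℓ.Prime]

lemma mul_mem_Mint_iff {k : Matrix (Fin 2) (Fin 2) ℚ_[ℓ]} (hk : ∀ i j, ‖k i j‖ ≤ 1)
    (hdet : ‖k.det‖ = 1) {x : Matrix (Fin 2) (Fin 2) ℚ_[ℓ]} : x * k ∈ Mint ℓ ↔ x ∈ Mint ℓ := by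
  have hk₀ : IsUnit k.det := isUnit_iff_ne_zero.2 (norm_ne_zero_iff.1 (by rw [hdet]; simp))
  constructor
  · rintro ⟨hxk, hu⟩
    refine ⟨fun i j => ?_, isUnit_of_mul_isUnit_left hu⟩
    simpa [Matrix.mul_assoc, Matrix.mul_nonsing_inv _ hk₀] using
      Matrix.norm_mul_apply_le_one hxk (Matrix.norm_inv_apply_le_one hk hdet) i j
  · rintro ⟨hx, hu⟩
    exact ⟨Matrix.norm_mul_apply_le_one hx hk, hu.mul ((Matrix.isUnit_iff_isUnit_det k).2 hk₀)⟩

variable (ℓ) in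
def tDiagInv (m : ℕ) : Matrix (Fin 2) (Fin 2) ℚ_[ℓ] :=
  Matrix.diagonal fun i => if (i : ℕ) < m then (ℓ : ℚ_[ℓ])⁻¹ else 1

lemma tDiag_mul_tDiagInv (m : ℕ) : tDiag ℓ m * tDiagInv ℓ m = 1 := by
  have hℓ : (ℓ : ℚ_[ℓ]) ≠ 0 := Nat.cast_ne_zero.2 (Fact.out : ℓ.Prime).ne_zero
  rw [tDiag, tDiagInv, Matrix.diagonal_mul_diagonal, ← Matrix.diagonal_one]
  congr 1
  funext i
  split_ifs <;> simp [hℓ]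

lemma tDiagInv_mul_tDiag (m : ℕ) : tDiagInv ℓ m * tDiag ℓ m = 1 :=
  mul_eq_one_comm.1 (tDiag_mul_tDiagInv m)

lemma Mt_eq_preimage (m : ℕ) : Mt ℓ m = (· * tDiagInv ℓ m) ⁻¹' Mint ℓ :=
  congrFun (Set.image_eq_preimage_of_inverse (f := (· * tDiag ℓ m)) (g := (· * tDiagInv ℓ m))
    (fun y => by simp only [Matrix.mul_assoc, tDiag_mul_tDiagInv, Matrix.mul_one])
    (fun y => by simp only [Matrix.mul_assoc, tDiagInv_mul_tDiag, Matrix.mul_one])) _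

lemma mem_Mt_iff {m : ℕ} {x : Matrix (Fin 2) (Fin 2) ℚ_[ℓ]} :
    x ∈ Mt ℓ m ↔
      IsUnit x ∧ ∀ i j : Fin 2, ‖x i j * if (j : ℕ) < m then (ℓ : ℚ_[ℓ])⁻¹ else 1‖ ≤ 1 := by
  rw [Mt_eq_preimage, Set.mem_preimage, Mint, Set.mem_ofPred_eq, and_comm,
    Units.isUnit_mul_units x ⟨_, _, tDiagInv_mul_tDiag m, tDiag_mul_tDiagInv m⟩]
  simp [tDiagInv, Matrix.mul_diagonal]

lemma mem_Mt_one_iff {x : Matrix (Fin 2) (Fin 2) ℚ_[ℓ]} :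
    x ∈ Mt ℓ 1 ↔ x ∈ Mint ℓ ∧ ∀ i, ‖x i 0‖ < 1 := by
  simp only [mem_Mt_iff, Mint, Set.mem_ofPred_eq, Fin.forall_fin_two, Fin.isValue, Fin.val_zero,
    Fin.val_one, zero_lt_one, lt_irrefl, if_true, if_false, mul_one, Padic.norm_mul_inv_le_one_iff]
  constructor
  · rintro ⟨hu, ⟨h00, h01⟩, h10, h11⟩
    exact ⟨⟨⟨⟨h00.le, h01⟩, h10.le, h11⟩, hu⟩, h00, h10⟩
  · rintro ⟨⟨⟨⟨-, h01⟩, -, h11⟩, hu⟩, h00, h10⟩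
    exact ⟨hu, ⟨h00, h01⟩, h10, h11⟩

lemma mem_Mt_two_iff {x : Matrix (Fin 2) (Fin 2) ℚ_[ℓ]} :
    x ∈ Mt ℓ 2 ↔ IsUnit x ∧ ∀ i j, ‖x i j‖ < 1 := by
  simp only [mem_Mt_iff, Fin.is_lt, if_true, Padic.norm_mul_inv_le_one_iff]

end Cosets

section Lines

variable {ℓ : ℕ} [Fact ℓ.Prime]

/- The lines of `𝔽_ℓ²` are indexed by `Option (Fin ℓ)`: `some a` is the line through `(1, -a)` and
`none` the line through `(0, 1)`. These vectors are the first columns of `lineMat ℓ c`, so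
`x ∈ Mline ℓ c` says that `x` is integral and its reduction mod `ℓ` kills the line `c`. -/
variable (ℓ) in
def lineMat : Option (Fin ℓ) → Matrix (Fin 2) (Fin 2) ℚ_[ℓ]
  | none => !![0, 1; 1, 0]
  | some a => !![1, 0; -((a : ℕ) : ℚ_[ℓ]), 1]

variable (ℓ) in
def Mline (c : Option (Fin ℓ)) : Set (Matrix (Fin 2) (Fin 2) ℚ_[ℓ]) :=
  (· * lineMat ℓ c) ⁻¹' Mt ℓ 1

lemma norm_lineMat_apply_le_one (c : Option (Fin ℓ)) (i j : Fin 2) : ‖lineMat ℓ c i j‖ ≤ 1 := by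
  cases c <;> fin_cases i <;> fin_cases j <;> simp [lineMat, IsUltrametricDist.norm_natCast_le_one]

lemma norm_det_lineMat (c : Option (Fin ℓ)) : ‖(lineMat ℓ c).det‖ = 1 := by
  cases c <;> simp [lineMat, Matrix.det_fin_two_of]

lemma isUnit_lineMat (c : Option (Fin ℓ)) : IsUnit (lineMat ℓ c) :=
  (Matrix.isUnit_iff_isUnit_det _).2 <| isUnit_iff_ne_zero.2 <|
    norm_ne_zero_iff.1 (by rw [norm_det_lineMat]; exact one_ne_zero)

lemma mul_lineMat_none_apply_zero (x : Matrix (Fin 2) (Fin 2) ℚ_[ℓ]) (i : Fin 2) :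
    (x * lineMat ℓ none) i 0 = x i 1 := by
  simp [lineMat, Matrix.mul_apply, Fin.sum_univ_two]

lemma mul_lineMat_some_apply_zero (x : Matrix (Fin 2) (Fin 2) ℚ_[ℓ]) (a : Fin ℓ) (i : Fin 2) :
    (x * lineMat ℓ (some a)) i 0 = x i 0 - (a : ℕ) * x i 1 := by
  simp only [lineMat, Matrix.mul_apply, Matrix.of_apply, Matrix.cons_val', Matrix.cons_val_zero,
    Matrix.cons_val_fin_one, Fin.sum_univ_two, mul_one, Matrix.cons_val_one, mul_neg]
  ring

lemma mem_Mline_iff {c : Option (Fin ℓ)} {x : Matrix (Fin 2) (Fin 2) ℚ_[ℓ]} :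
    x ∈ Mline ℓ c ↔ x ∈ Mint ℓ ∧ ∀ i, ‖(x * lineMat ℓ c) i 0‖ < 1 := by
  rw [Mline, Set.mem_preimage, mem_Mt_one_iff,
    mul_mem_Mint_iff (norm_lineMat_apply_le_one c) (norm_det_lineMat c)]

lemma Mt_two_subset_Mline (c : Option (Fin ℓ)) : Mt ℓ 2 ⊆ Mline ℓ c := by
  intro x hx
  obtain ⟨hu, hx⟩ := mem_Mt_two_iff.1 hx
  exact mem_Mline_iff.2 ⟨⟨fun i j => (hx i j).le, hu⟩,
    fun i => Matrix.norm_mul_apply_lt_one (hx i) fun k => norm_lineMat_apply_le_one c k 0⟩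

lemma Mline_inter_subset_Mt_two {c d : Option (Fin ℓ)} (hcd : c ≠ d) :
    Mline ℓ c ∩ Mline ℓ d ⊆ Mt ℓ 2 := by
  rintro x ⟨hc, hd⟩
  obtain ⟨⟨hx, hu⟩, hc⟩ := mem_Mline_iff.1 hc
  replace hd := (mem_Mline_iff.1 hd).2
  obtain ⟨a, ha, hcol₁⟩ :
      ∃ a : Fin ℓ, (∀ i, ‖x i 0 - (a : ℕ) * x i 1‖ < 1) ∧ ∀ i, ‖x i 1‖ < 1 := by
    rcases c with _ | a <;> rcases d with _ | b
    · exact absurd rfl hcd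
    · exact ⟨b, by simpa only [mul_lineMat_some_apply_zero] using hd,
        by simpa only [mul_lineMat_none_apply_zero] using hc⟩
    · exact ⟨a, by simpa only [mul_lineMat_some_apply_zero] using hc,
        by simpa only [mul_lineMat_none_apply_zero] using hd⟩
    · simp only [mul_lineMat_some_apply_zero] at hc hd
      exact ⟨a, hc, fun i => Padic.norm_lt_one_of_norm_sub_natCast_mul_lt_one_of_ne (hx i 0)
        (hx i 1) a.2 b.2 (fun h => hcd (congrArg some (Fin.ext h))) (hc i) (hd i)⟩
  exact mem_Mt_two_iff.2 ⟨hu, fun i => Fin.forall_fin_two.2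
    ⟨IsUltrametricDist.norm_lt_one_of_norm_sub_mul_lt_one
      (IsUltrametricDist.norm_natCast_le_one _ _) (ha i) (hcol₁ i), hcol₁ i⟩⟩

lemma MintGeOne_eq_iUnion_Mline : MintGeOne ℓ = ⋃ c, Mline ℓ c := by
  ext x
  rw [Set.mem_iUnion]
  constructor
  · rintro ⟨hxM, hdet⟩
    rw [Padic.norm_le_inv_iff_lt_one] at hdet
    by_cases hcol₁ : ∀ i, ‖x i 1‖ < 1
    · exact ⟨none, mem_Mline_iff.2
        ⟨hxM, by simpa only [mul_lineMat_none_apply_zero] using hcol₁⟩⟩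
    obtain ⟨i, hi⟩ := not_forall.1 hcol₁
    have hi₁ : ‖x i 1‖ = 1 := le_antisymm (hxM.1 i 1) (not_lt.1 hi)
    obtain ⟨a, ha, hai⟩ := (Padic.existsUnique_natCast_norm_sub_lt_one (z := x i 0 / x i 1)
      (by rw [norm_div, hi₁, div_one]; exact hxM.1 i 0)).exists
    refine ⟨some ⟨a, ha⟩, mem_Mline_iff.2 ⟨hxM, fun j => ?_⟩⟩
    rw [mul_lineMat_some_apply_zero]
    exact IsUltrametricDist.norm_sub_mul_lt_one_of_minor hi₁ (hxM.1 j 1)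
      (Matrix.norm_minor_fin_two_lt_one hdet i j)
      ((norm_div_sub_eq_norm_sub_mul hi₁ _).symm.trans_lt hai)
  · rintro ⟨c, hc⟩
    obtain ⟨hxM, hcol₀⟩ := mem_Mline_iff.1 hc
    refine ⟨hxM, Padic.norm_le_inv_iff_lt_one.2 ?_⟩
    have := Matrix.norm_det_fin_two_lt_one
      ((mul_mem_Mint_iff (norm_lineMat_apply_le_one c) (norm_det_lineMat c)).2 hxM).1 hcol₀
    rwa [Matrix.det_mul, norm_mul, norm_det_lineMat, mul_one] at this

end Lines

section Measurability

variable {ℓ : ℕ} [Fact ℓ.Prime] [MeasurableSpace (Matrix (Fin 2) (Fin 2) ℚ_[ℓ])]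
  [BorelSpace (Matrix (Fin 2) (Fin 2) ℚ_[ℓ])]

lemma measurableSet_Mint : MeasurableSet (Mint ℓ) := by
  have hclosed : IsClosed {x : Matrix (Fin 2) (Fin 2) ℚ_[ℓ] | ∀ i j, ‖x i j‖ ≤ 1} := by
    simp only [Set.ofPred_forall]
    exact isClosed_iInter fun i => isClosed_iInter fun j =>
      isClosed_le (continuous_apply_apply i j).norm continuous_const
  have hopen : IsOpen {x : Matrix (Fin 2) (Fin 2) ℚ_[ℓ] | IsUnit x} := by
    simp only [Matrix.isUnit_iff_isUnit_det, isUnit_iff_ne_zero]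
    exact isOpen_ne_fun continuous_id.matrix_det continuous_const
  exact hclosed.measurableSet.inter hopen.measurableSet

lemma measurableSet_Mt (m : ℕ) : MeasurableSet (Mt ℓ m) := by
  rw [Mt_eq_preimage]
  exact (continuous_mul_const _).measurable measurableSet_Mint

lemma measurableSet_Mline (c : Option (Fin ℓ)) : MeasurableSet (Mline ℓ c) :=
  (continuous_mul_const _).measurable (measurableSet_Mt 1)

end Measurability

/-- Inclusion–exclusion for `n = 2`: for a right `GL₂(ℤ_ℓ)`-invariant integrable function `f`
on `GL₂(ℚ_ℓ)` and `μ_f(S) = ∫_S f` with respect to a (right-invariant) Haar measure,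
`μ_f(M^{≥1}) = (ℓ+1)·μ_f(M t₁) - ℓ·μ_f(M t₂)`. -/
theorem statement18 (ℓ : ℕ) [Fact ℓ.Prime]
    [MeasurableSpace (Matrix (Fin 2) (Fin 2) ℚ_[ℓ])]
    [BorelSpace (Matrix (Fin 2) (Fin 2) ℚ_[ℓ])]
    (ν : Measure (Matrix (Fin 2) (Fin 2) ℚ_[ℓ]))
    (hinv : ∀ g : Matrix (Fin 2) (Fin 2) ℚ_[ℓ], IsUnit g →
      Measure.map (fun x => x * g) ν = ν)
    (f : Matrix (Fin 2) (Fin 2) ℚ_[ℓ] → ℂ)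
    (hf : Integrable f ν)
    (hK : ∀ k : Matrix (Fin 2) (Fin 2) ℚ_[ℓ], (∀ i j, ‖k i j‖ ≤ 1) → ‖k.det‖ = 1 →
      ∀ x, f (x * k) = f x) :
    (∫ x in MintGeOne ℓ, f x ∂ν)
      = ((ℓ : ℂ) + 1) * (∫ x in Mt ℓ 1, f x ∂ν) - (ℓ : ℂ) * (∫ x in Mt ℓ 2, f x ∂ν) := by
  have hMline : ∀ c, ∫ x in Mline ℓ c, f x ∂ν = ∫ x in Mt ℓ 1, f x ∂ν := fun c =>
    setIntegral_preimage_mul_right (isUnit_lineMat c) (hinv _ (isUnit_lineMat c))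
      (hK _ (norm_lineMat_apply_le_one c) (norm_det_lineMat c)) _
  have key := setIntegral_iUnion_add_nsmul (N := ℓ) (by simp) measurableSet_Mline
    (measurableSet_Mt 2) Mt_two_subset_Mline (fun _ _ => Mline_inter_subset_Mt_two) hf
  rw [← MintGeOne_eq_iUnion_Mline, Finset.sum_congr rfl fun c _ => hMline c, Finset.sum_const,
    Finset.card_univ, Fintype.card_option, Fintype.card_fin] at key
  simp only [nsmul_eq_mul, Nat.cast_add, Nat.cast_one] at key
  linear_combination key

end
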